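/- arXiv:1606.00236 — 5 statements merged into one kernel-verified Lean document; each statement's English description precedes it below -/
import Mathlib

section
/- Let $(Z_n)_{n\ge 0}$ be a real-valued stochastic process with stationary increments and $Z_0=0$. Then for every $n\ge 1$, $n\,\mathbb{P}(\min_{1\le \ell \le n}|Z_\ell|\ge 1) \le \mathbb{E}[\max_{1\le k\le n} Z_k - \min_{1\le k\le n} Z_k] + 2$. -/
open MeasureTheory Filter Finset

noncomputable section

/-- A process has stationary increments if for every `k`, the shifted-increment
process `(Z_{n+k} - Z_k)_n` has the same law (as a process) as `(Z_n)_n`. -/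
def HasStationaryIncrements {Ω : Type*} [MeasurableSpace Ω] (μ : Measure Ω)
    (Z : ℕ → Ω → ℝ) : Prop :=
  ∀ k : ℕ, Measure.map (fun ω => fun n => Z (n + k) ω - Z k ω) μ
    = Measure.map (fun ω => fun n => Z n ω) μ

/-! Call `k < n` an escape time if the path stays at distance `≥ 1` from `Z_k` during the next
`n` steps. The values `Z_k` at escape times are `1`-separated, and apart from `Z_0` they lie
in `[min_{1 ≤ k ≤ n} Z_k, max_{1 ≤ k ≤ n} Z_k]`, so there are at most `max - min + 2` of them.
Taking expectations, and using that by stationarity each `k` is an escape time with the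
probability that `0` is, gives the bound. -/

lemma card_le_of_pairwise_one_le_abs_sub {ι : Type*} {s : Finset ι} {f : ι → ℝ} {a b : ℝ}
    (hab : a ≤ b) (hf : ∀ i ∈ s, f i ∈ Set.Icc a b)
    (hsep : (s : Set ι).Pairwise fun i j => 1 ≤ |f i - f j|) :
    (#s : ℝ) ≤ b - a + 1 := by
  have hmaps : Set.MapsTo (fun i => ⌊f i - a⌋) s (Icc 0 ⌊b - a⌋) := fun i hi => by
    obtain ⟨hai, hib⟩ := hf i hi
    simp only [coe_Icc, Set.mem_Icc, Int.floor_nonneg, sub_nonneg]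
    exact ⟨hai, Int.floor_mono (by linarith)⟩
  -- points at distance at least `1` have distinct floors
  have hinj : Set.InjOn (fun i => ⌊f i - a⌋) s := fun i hi j hj hij => by
    by_contra hne
    have := Int.abs_sub_lt_one_of_floor_eq_floor hij
    rw [sub_sub_sub_cancel_right] at this
    exact (hsep hi hj hne).not_gt this
  have hcard : (#s : ℤ) ≤ ⌊b - a⌋ + 1 := by
    have := card_le_card_of_injOn _ hmaps hinj
    rw [Int.card_Icc, sub_zero] at this
    have : 0 ≤ ⌊b - a⌋ := Int.floor_nonneg.2 (sub_nonneg.2 hab)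
    omega
  calc (#s : ℝ) = ((#s : ℤ) : ℝ) := rfl
    _ ≤ ⌊b - a⌋ + 1 := by exact_mod_cast hcard
    _ ≤ b - a + 1 := by linarith [Int.floor_le (b - a)]

open Classical in
def escapeTimes (z : ℕ → ℝ) (n : ℕ) : Finset ℕ :=
  {k ∈ range n | ∀ ℓ ∈ Icc 1 n, 1 ≤ |z (ℓ + k) - z k|}

lemma pairwise_one_le_abs_sub_escapeTimes (z : ℕ → ℝ) (n : ℕ) :
    (escapeTimes z n : Set ℕ).Pairwise fun k k' => 1 ≤ |z k - z k'| := by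
  have key : ∀ k ∈ escapeTimes z n, ∀ k' ∈ escapeTimes z n, k < k' → 1 ≤ |z k - z k'| := by
    intro k hk k' hk' hlt
    simp only [escapeTimes, mem_filter, mem_range] at hk hk'
    have := hk.2 (k' - k) (mem_Icc.2 ⟨by omega, by omega⟩)
    rwa [Nat.sub_add_cancel hlt.le, abs_sub_comm] at this
  intro k hk k' hk' hne
  rcases hne.lt_or_gt with hlt | hlt
  · exact key k hk k' hk' hlt
  · rw [abs_sub_comm]
    exact key k' hk' k hk hlt

lemma card_escapeTimes_le (z : ℕ → ℝ) {n : ℕ} (hn : 1 ≤ n) :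
    (#(escapeTimes z n) : ℝ) ≤ (⨆ k : Icc 1 n, z k.1) - (⨅ k : Icc 1 n, z k.1) + 2 := by
  have hbounds : ∀ k ∈ Icc 1 n, z k ∈ Set.Icc (⨅ k : Icc 1 n, z k.1) (⨆ k : Icc 1 n, z k.1) :=
    fun k hk => ⟨ciInf_le (Set.finite_range fun k : Icc 1 n => z k.1).bddBelow ⟨k, hk⟩,
      le_ciSup (Set.finite_range fun k : Icc 1 n => z k.1).bddAbove ⟨k, hk⟩⟩
  obtain ⟨hmin_le, hle_max⟩ := hbounds 1 (mem_Icc.2 ⟨le_rfl, hn⟩)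
  have hpos : ∀ k ∈ (escapeTimes z n).erase 0, k ∈ Icc 1 n := fun k hk => by
    simp only [mem_erase, escapeTimes, mem_filter, mem_range] at hk
    exact mem_Icc.2 ⟨by omega, by omega⟩
  have herase := card_le_of_pairwise_one_le_abs_sub (hmin_le.trans hle_max)
    (fun k hk => hbounds k (hpos k hk))
    ((pairwise_one_le_abs_sub_escapeTimes z n).mono (coe_subset.2 (erase_subset _ _)))
  have hcard : #(escapeTimes z n) ≤ #((escapeTimes z n).erase 0) + 1 := by
    have := pred_card_le_card_erase (s := escapeTimes z n) (a := 0)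
    omega
  calc (#(escapeTimes z n) : ℝ) ≤ #((escapeTimes z n).erase 0) + 1 := by exact_mod_cast hcard
    _ ≤ _ := by linarith

lemma integral_card_filter_mem {Ω ι : Type*} [MeasurableSpace Ω] (μ : Measure Ω)
    [IsFiniteMeasure μ] (s : Finset ι) {A : ι → Set Ω} [∀ i, DecidablePred (· ∈ A i)]
    (hA : ∀ i ∈ s, MeasurableSet (A i)) :
    ∫ ω, (#{i ∈ s | ω ∈ A i} : ℝ) ∂μ = ∑ i ∈ s, μ.real (A i) := by
  have hind : ∀ ω, (#{i ∈ s | ω ∈ A i} : ℝ) = ∑ i ∈ s, (A i).indicator 1 ω := fun ω => by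
    simp only [natCast_card_filter, Set.indicator_apply, Pi.one_apply]
  simp_rw [hind]
  rw [integral_finsetSum _ fun i hi => (integrable_const 1).indicator (hA i hi)]
  exact sum_congr rfl fun i hi => integral_indicator_one (hA i hi)

lemma HasStationaryIncrements.measure_preimage_shift {Ω : Type*} [MeasurableSpace Ω]
    {μ : Measure Ω} {Z : ℕ → Ω → ℝ} (h : HasStationaryIncrements μ Z)
    (hZ : ∀ n, Measurable (Z n)) {B : Set (ℕ → ℝ)} (hB : MeasurableSet B) (k : ℕ) :
    μ ((fun ω n => Z (n + k) ω - Z k ω) ⁻¹' B) = μ ((fun ω n => Z n ω) ⁻¹' B) := by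
  rw [← Measure.map_apply (by fun_prop) hB, ← Measure.map_apply (by fun_prop) hB, h k]

theorem stmt0_general {Ω : Type*} [MeasurableSpace Ω] (μ : Measure Ω) [IsProbabilityMeasure μ]
    (Z : ℕ → Ω → ℝ) (hmeas : ∀ n, Measurable (Z n))
    (hstat : HasStationaryIncrements μ Z)
    (hintmax : ∀ n, Integrable (fun ω => ⨆ k : Finset.Icc 1 n, Z k.1 ω) μ)
    (hintmin : ∀ n, Integrable (fun ω => ⨅ k : Finset.Icc 1 n, Z k.1 ω) μ)
    (n : ℕ) (hn : 1 ≤ n) :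
    (n : ℝ) * (μ {ω | ∀ ℓ ∈ Finset.Icc 1 n, 1 ≤ |Z ℓ ω|}).toReal
      ≤ (∫ ω, ((⨆ k : Finset.Icc 1 n, Z k.1 ω) - ⨅ k : Finset.Icc 1 n, Z k.1 ω) ∂μ) + 2 := by
  set B : Set (ℕ → ℝ) := {f | ∀ ℓ ∈ Icc 1 n, 1 ≤ |f ℓ|}
  have hB : MeasurableSet B := by
    refine measurableSet_setOfPred.2 (Measurable.forall fun ℓ => Measurable.forall fun _ => ?_)
    exact measurableSet_setOfPred.1 (measurableSet_le measurable_const (measurable_pi_apply ℓ).abs)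
  set A : ℕ → Set Ω := fun k => (fun ω j => Z (j + k) ω - Z k ω) ⁻¹' B
  have hA : ∀ k, MeasurableSet (A k) := fun k => (by fun_prop : Measurable _) hB
  have hAE : ∀ k, μ.real (A k) = (μ {ω | ∀ ℓ ∈ Icc 1 n, 1 ≤ |Z ℓ ω|}).toReal := fun k =>
    congrArg ENNReal.toReal (hstat.measure_preimage_shift hmeas hB k)
  have hint : Integrable (fun ω => (⨆ k : Icc 1 n, Z k.1 ω) - ⨅ k : Icc 1 n, Z k.1 ω) μ :=
    (hintmax n).sub (hintmin n)
  calc (n : ℝ) * (μ {ω | ∀ ℓ ∈ Icc 1 n, 1 ≤ |Z ℓ ω|}).toReal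
      = ∑ k ∈ range n, μ.real (A k) := by simp only [hAE, sum_const, card_range, nsmul_eq_mul]
    _ = ∫ ω, (#(escapeTimes (Z · ω) n) : ℝ) ∂μ := by
        classical
        convert (integral_card_filter_mem μ (range n) fun k _ => hA k).symm using 5
        ext k
        simp [escapeTimes, A, B]
    _ ≤ ∫ ω, ((⨆ k : Icc 1 n, Z k.1 ω) - (⨅ k : Icc 1 n, Z k.1 ω) + 2) ∂μ :=
        integral_mono_of_nonneg (.of_forall fun _ => by positivity) (hint.add (integrable_const 2))
          (.of_forall fun ω => card_escapeTimes_le (Z · ω) hn)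
    _ = _ := by simp [integral_add hint (integrable_const 2)]

theorem stmt0 {Ω : Type*} [MeasurableSpace Ω] (μ : Measure Ω) [IsProbabilityMeasure μ]
    (Z : ℕ → Ω → ℝ) (hmeas : ∀ n, Measurable (Z n)) (hZ0 : ∀ ω, Z 0 ω = 0)
    (hstat : HasStationaryIncrements μ Z)
    (hintmax : ∀ n, Integrable (fun ω => ⨆ k : Finset.Icc 1 n, Z k.1 ω) μ)
    (hintmin : ∀ n, Integrable (fun ω => ⨅ k : Finset.Icc 1 n, Z k.1 ω) μ)
    (n : ℕ) (hn : 1 ≤ n) :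
    (n : ℝ) * (μ {ω | ∀ ℓ ∈ Finset.Icc 1 n, 1 ≤ |Z ℓ ω|}).toReal
      ≤ (∫ ω, ((⨆ k : Finset.Icc 1 n, Z k.1 ω) - ⨅ k : Finset.Icc 1 n, Z k.1 ω) ∂μ) + 2 :=
  stmt0_general μ Z hmeas hstat hintmax hintmin n hn
end
end

section
/- Let $(Z_n)_{n\ge 0}$ be a centered process with stationary increments, $Z_0=0$, and $\mathbb{E}[Z_n]=0$ for all $n$. Then for every $n\ge 1$, $n\,\mathbb{P}(\max_{1\le \ell\le n} Z_\ell \le -1) \le \mathbb{E}[\max_{0\le k\le n} Z_k]$. -/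
/-!
Call `i < n` a drop time of a path `z` if `z j ≤ z i - 1` for all `i < j ≤ n`. Reading the
running maximum `M i = max_{i ≤ j ≤ n} z j` backwards from `M n = z n`, every drop time raises it
by at least `1`, so the number of drop times is at most `M 0 - z n`. By stationarity of the
increments, `i` is a drop time of `Z` with probability
`P(max_{1 ≤ ℓ ≤ n - i} Z ℓ ≤ -1) ≥ P(max_{1 ≤ ℓ ≤ n} Z ℓ ≤ -1)`; taking expectations and using
`E[Z n] = 0` gives the bound.
-/

open MeasureTheory Filter Finset

noncomputable section

theorem partialSups_eq_ciSup_Icc_zero {α : Type*} [ConditionallyCompleteLinearOrder α]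
    (f : ℕ → α) (n : ℕ) : partialSups f n = ⨆ k : Icc 0 n, f k := by
  have : Nonempty (Icc 0 n) := ⟨⟨0, by simp⟩⟩
  apply le_antisymm
  · exact partialSups_le _ _ _ fun k hk ↦ Finite.le_ciSup_of_le ⟨k, by simpa using hk⟩ le_rfl
  · exact ciSup_le fun ⟨k, hk⟩ ↦ le_partialSups_of_le f (mem_Icc.1 hk).2

theorem MeasureTheory.Integrable.partialSups {Ω β : Type*} [MeasurableSpace Ω] {μ : Measure Ω}
    [NormedAddCommGroup β] [Lattice β] [HasSolidNorm β] [IsOrderedAddMonoid β]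
    {f : ℕ → Ω → β} {n : ℕ} (hf : ∀ k ≤ n, Integrable (f k) μ) :
    Integrable (partialSups f n) μ := by
  induction n with
  | zero => simpa using hf 0 le_rfl
  | succ n ih =>
    rw [partialSups_add_one]
    exact (ih fun k hk ↦ hf k (by omega)).sup (hf (n + 1) le_rfl)

theorem sum_indicator_drop_le_partialSups_sub (z : ℕ → ℝ) (n : ℕ) :
    ∑ i ∈ range n, {i | ∀ ℓ ∈ Icc 1 (n - i), z (ℓ + i) - z i ≤ -1}.indicator 1 i
      ≤ partialSups z n - z n := by
  induction n generalizing z with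
  | zero => simp
  | succ n ih =>
    have ih_tail := ih (z ∘ (· + 1))
    rw [sum_range_succ', partialSups_add_one', Nat.bot_eq_zero]
    simp only [Set.indicator_apply, Set.mem_ofPred_eq, Pi.one_apply, Nat.add_sub_add_right,
      Nat.sub_zero, add_zero, ← add_assoc, Function.comp_apply] at ih_tail ⊢
    split_ifs with hdrop
    · have hmax : partialSups (z ∘ (· + 1)) n ≤ z 0 - 1 := partialSups_le _ _ _ fun k hk ↦
        show z (k + 1) ≤ z 0 - 1 by linarith [hdrop (k + 1) (by simp; omega)]
      linarith [le_sup_left (a := z 0) (b := partialSups (z ∘ (· + 1)) n)]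
    · linarith [le_sup_right (a := z 0) (b := partialSups (z ∘ (· + 1)) n)]

namespace HasStationaryIncrements

variable {Ω : Type*} [MeasurableSpace Ω] {μ : Measure Ω} {Z : ℕ → Ω → ℝ}

theorem measure_preimage_eq (hstat : HasStationaryIncrements μ Z) (hmeas : ∀ n, Measurable (Z n))
    (k : ℕ) {S : Set (ℕ → ℝ)} (hS : MeasurableSet S) :
    μ ((fun ω n ↦ Z (n + k) ω - Z k ω) ⁻¹' S) = μ ((fun ω n ↦ Z n ω) ⁻¹' S) := by
  rw [← Measure.map_apply (by fun_prop) hS, hstat k, Measure.map_apply (by fun_prop) hS]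

theorem measure_le_measure_increments (hstat : HasStationaryIncrements μ Z)
    (hmeas : ∀ n, Measurable (Z n)) (k : ℕ) {m n : ℕ} (hmn : m ≤ n) :
    μ {ω | ∀ ℓ ∈ Icc 1 n, Z ℓ ω ≤ -1} ≤ μ {ω | ∀ ℓ ∈ Icc 1 m, Z (ℓ + k) ω - Z k ω ≤ -1} := by
  have hS : MeasurableSet {f : ℕ → ℝ | ∀ ℓ ∈ Icc 1 m, f ℓ ≤ -1} := by measurability
  have hsub : {ω | ∀ ℓ ∈ Icc 1 n, Z ℓ ω ≤ -1} ⊆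
      (fun ω ℓ ↦ Z ℓ ω) ⁻¹' {f | ∀ ℓ ∈ Icc 1 m, f ℓ ≤ -1} := fun ω hω ℓ hℓ ↦
    hω ℓ (by simp only [mem_Icc] at hℓ ⊢; omega)
  exact (measure_mono hsub).trans (hstat.measure_preimage_eq hmeas k hS).ge

end HasStationaryIncrements

theorem stmt1_general {Ω : Type*} [MeasurableSpace Ω] (μ : Measure Ω) [IsProbabilityMeasure μ]
    (Z : ℕ → Ω → ℝ) (hmeas : ∀ n, Measurable (Z n))
    (hstat : HasStationaryIncrements μ Z)
    (hint : ∀ n, Integrable (Z n) μ)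
    (hcent : ∀ n, ∫ ω, Z n ω ∂μ = 0)
    (n : ℕ) :
    (n : ℝ) * (μ {ω | ∀ ℓ ∈ Finset.Icc 1 n, Z ℓ ω ≤ -1}).toReal
      ≤ ∫ ω, ⨆ k : Finset.Icc 0 n, Z k.1 ω ∂μ := by
  set H : ℕ → Set Ω := fun i ↦ {ω | ∀ ℓ ∈ Icc 1 (n - i), Z (ℓ + i) ω - Z i ω ≤ -1}
  have hH : ∀ i, MeasurableSet (H i) := fun i ↦ by measurability
  calc (n : ℝ) * (μ {ω | ∀ ℓ ∈ Icc 1 n, Z ℓ ω ≤ -1}).toReal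
      = ∑ i ∈ range n, (μ {ω | ∀ ℓ ∈ Icc 1 n, Z ℓ ω ≤ -1}).toReal := by simp
    _ ≤ ∑ i ∈ range n, μ.real (H i) :=
        sum_le_sum fun i _ ↦ ENNReal.toReal_mono (measure_ne_top _ _)
          (hstat.measure_le_measure_increments hmeas i (Nat.sub_le n i))
    _ = ∫ ω, ∑ i ∈ range n, (H i).indicator 1 ω ∂μ := by
        rw [integral_finsetSum _ fun i _ ↦ (integrable_const 1).indicator (hH i)]
        simp only [integral_indicator_one (hH _)]
    _ ≤ ∫ ω, (partialSups Z n ω - Z n ω) ∂μ := by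
        refine integral_mono (integrable_finsetSum _ fun i _ ↦
          (integrable_const 1).indicator (hH i))
          ((Integrable.partialSups fun k _ ↦ hint k).sub (hint n)) fun ω ↦ ?_
        rw [Pi.partialSups_apply]
        exact sum_indicator_drop_le_partialSups_sub (Z · ω) n
    _ = ∫ ω, ⨆ k : Icc 0 n, Z k.1 ω ∂μ := by
        rw [integral_sub (Integrable.partialSups fun k _ ↦ hint k) (hint n), hcent, sub_zero]
        simp only [Pi.partialSups_apply, partialSups_eq_ciSup_Icc_zero]

theorem stmt1 {Ω : Type*} [MeasurableSpace Ω] (μ : Measure Ω) [IsProbabilityMeasure μ]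
    (Z : ℕ → Ω → ℝ) (hmeas : ∀ n, Measurable (Z n)) (hZ0 : ∀ ω, Z 0 ω = 0)
    (hstat : HasStationaryIncrements μ Z)
    (hint : ∀ n, Integrable (Z n) μ)
    (hcent : ∀ n, ∫ ω, Z n ω ∂μ = 0)
    (hintmax : ∀ n, Integrable (fun ω => ⨆ k : Finset.Icc 0 n, Z k.1 ω) μ)
    (n : ℕ) (hn : 1 ≤ n) :
    (n : ℝ) * (μ {ω | ∀ ℓ ∈ Finset.Icc 1 n, Z ℓ ω ≤ -1}).toReal
      ≤ ∫ ω, ⨆ k : Finset.Icc 0 n, Z k.1 ω ∂μ :=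
  stmt1_general μ Z hmeas hstat hint hcent n
end
end

section
/- Let $(Z_n)_{n\ge 0}$ be an integer-valued process with stationary increments and $Z_0=0$. Let $T_0:=\inf\{n\ge 1: Z_n=0\}$, $\mathcal{R}_n:=\#\{Z_0,\dots,Z_n\}$. Suppose $(a_n)$ is a regularly varying sequence with exponent $\gamma\in(0,1)$ and $\mathbb{E}[\mathcal{R}_n]/a_n \to C$ as $n\to\infty$ for some $C\in(0,\infty)$. Then $\lim_{n\to\infty} \frac{n}{a_n}\mathbb{P}(T_0 > n) = \gamma C$. -/
open MeasureTheory Filter Finset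

noncomputable section

/-- A sequence of positive reals is regularly varying with exponent `γ` if
`a ⌊λ n⌋ / a n → λ ^ γ` for every `λ > 0`. -/
def RegularlyVarying (a : ℕ → ℝ) (γ : ℝ) : Prop :=
  ∀ lam : ℝ, 0 < lam →
    Tendsto (fun n : ℕ => a ⌊lam * n⌋₊ / a n) atTop (nhds (lam ^ γ))

/-!
Counting every visited value at the time of its last visit up to `n` gives
`R_n = ∑_{k ≤ n} 1{Z_j ≠ Z_k for k < j ≤ n}`, and stationarity of the increments turns the
expectation of the `k`-th term into `P(T_0 > n - k)`, so `E R_n = ∑_{m ≤ n} P(T_0 > m)`.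
Since `p m = P(T_0 > m)` is nonincreasing, `p n` is squeezed between the averages of `p` over
the blocks between `n` and `⌊x n⌋` for `x > 1` and `x < 1`. By regular variation these averages,
scaled by `n / a n`, tend to `C (x ^ γ - 1) / (x - 1)`, which tends to `γ C` as `x → 1`.
-/

open Topology

lemma tendsto_rpow_sub_one_div_sub_one (γ : ℝ) :
    Tendsto (fun x : ℝ => (x ^ γ - 1) / (x - 1)) (𝓝[≠] 1) (𝓝 γ) := by
  have hd : HasDerivAt (fun x : ℝ => x ^ γ) γ 1 := by
    simpa using Real.hasDerivAt_rpow_const (x := 1) (p := γ) (Or.inl one_ne_zero)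
  refine (hasDerivAt_iff_tendsto_slope.1 hd).congr fun x => ?_
  rw [slope_def_field, Real.one_rpow]

lemma eventually_lt_nat_floor_mul {x : ℝ} (hx : 1 < x) :
    ∀ᶠ n : ℕ in atTop, n < ⌊x * n⌋₊ := by
  have h : Tendsto (fun n : ℕ => (x - 1) * n) atTop atTop :=
    tendsto_natCast_atTop_atTop.const_mul_atTop (by linarith)
  filter_upwards [h.eventually_ge_atTop 1] with n hn
  rw [Nat.lt_iff_add_one_le, Nat.le_floor_iff' n.succ_ne_zero]
  push_cast
  linarith

lemma eventually_nat_floor_mul_lt {x : ℝ} (hx : x < 1) :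
    ∀ᶠ n : ℕ in atTop, ⌊x * n⌋₊ < n := by
  filter_upwards [eventually_gt_atTop 0] with n hn
  have hn' : (0 : ℝ) < n := by exact_mod_cast hn
  exact Nat.floor_lt' hn.ne' |>.2 (by nlinarith)

namespace Antitone

variable {p : ℕ → ℝ}

lemma sum_range_succ_sub_le (hp : Antitone p) {n M : ℕ} (h : n ≤ M) :
    ∑ m ∈ range (M + 1), p m - ∑ m ∈ range (n + 1), p m ≤ (M - n) * p n := by
  rw [← sum_Ico_eq_sub p (by omega)]
  calc ∑ m ∈ Ico (n + 1) (M + 1), p m ≤ #(Ico (n + 1) (M + 1)) • p n :=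
        sum_le_card_nsmul _ _ _ fun m hm => hp (by simp at hm; omega)
    _ = (M - n) * p n := by simp [Nat.cast_sub h]

lemma le_sum_range_succ_sub (hp : Antitone p) {n M : ℕ} (h : M ≤ n) :
    (n - M) * p n ≤ ∑ m ∈ range (n + 1), p m - ∑ m ∈ range (M + 1), p m := by
  rw [← sum_Ico_eq_sub p (by omega)]
  calc (n - M) * p n = #(Ico (M + 1) (n + 1)) • p n := by simp [Nat.cast_sub h]
    _ ≤ ∑ m ∈ Ico (M + 1) (n + 1), p m :=
        card_nsmul_le_sum _ _ _ fun m hm => hp (by simp at hm; omega)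

lemma sum_range_succ_sub_div_mul_le (hp : Antitone p) {a : ℝ} (ha : 0 < a) {n M : ℕ}
    (h : n < M) :
    (∑ m ∈ range (M + 1), p m - ∑ m ∈ range (n + 1), p m) / a * (n / (M - n))
      ≤ n / a * p n := by
  have hMn : (0 : ℝ) < M - n := by rw [sub_pos]; exact_mod_cast h
  calc _ = (∑ m ∈ range (M + 1), p m - ∑ m ∈ range (n + 1), p m) / (M - n) * (n / a) := by
        ring
    _ ≤ p n * (n / a) := by
        gcongr
        rw [div_le_iff₀ hMn, mul_comm]
        exact hp.sum_range_succ_sub_le h.le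
    _ = n / a * p n := mul_comm _ _

lemma le_sum_range_succ_sub_div_mul (hp : Antitone p) {a : ℝ} (ha : 0 < a) {n M : ℕ}
    (h : M < n) :
    n / a * p n
      ≤ (∑ m ∈ range (M + 1), p m - ∑ m ∈ range (n + 1), p m) / a * (n / (M - n)) := by
  have hnM : (0 : ℝ) < n - M := by rw [sub_pos]; exact_mod_cast h
  calc n / a * p n = p n * (n / a) := mul_comm _ _
    _ ≤ (∑ m ∈ range (n + 1), p m - ∑ m ∈ range (M + 1), p m) / (n - M) * (n / a) := by
        gcongr
        rw [le_div_iff₀ hnM, mul_comm]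
        exact hp.le_sum_range_succ_sub h.le
    _ = _ := by
        have : (M : ℝ) - n ≠ 0 := by linarith
        field_simp
        ring

end Antitone

namespace RegularlyVarying

variable {a : ℕ → ℝ} {γ : ℝ}

lemma tendsto_sub_div_mul_div (hreg : RegularlyVarying a γ) (hapos : ∀ n, 0 < a n)
    {S : ℕ → ℝ} {C : ℝ} (hS : Tendsto (fun n => S n / a n) atTop (𝓝 C))
    {x : ℝ} (hx0 : 0 < x) (hx1 : x ≠ 1) :
    Tendsto (fun n : ℕ => (S ⌊x * n⌋₊ - S n) / a n * (n / (⌊x * n⌋₊ - n)))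
      atTop (𝓝 (C * ((x ^ γ - 1) / (x - 1)))) := by
  have hfloor : Tendsto (fun n : ℕ => ⌊x * n⌋₊) atTop atTop :=
    tendsto_nat_floor_atTop.comp (tendsto_natCast_atTop_atTop.const_mul_atTop hx0)
  have hdiff : Tendsto (fun n : ℕ => (S ⌊x * n⌋₊ - S n) / a n) atTop (𝓝 (C * x ^ γ - C)) := by
    refine (((hS.comp hfloor).mul (hreg x hx0)).sub hS).congr fun n => ?_
    have := (hapos ⌊x * n⌋₊).ne'
    simp only [Function.comp_apply]
    field_simp
  have hratio : Tendsto (fun n : ℕ => (n : ℝ) / (⌊x * n⌋₊ - n)) atTop (𝓝 (x - 1)⁻¹) := by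
    have h := (((tendsto_nat_floor_mul_div_atTop hx0.le).comp tendsto_natCast_atTop_atTop).sub
      (tendsto_const_nhds (x := (1 : ℝ)))).inv₀ (sub_ne_zero.2 hx1)
    refine h.congr' ?_
    filter_upwards [eventually_gt_atTop 0] with n hn
    have : (n : ℝ) ≠ 0 := by exact_mod_cast hn.ne'
    simp only [Function.comp_apply]
    rw [div_sub_one this, inv_div]
  convert hdiff.mul hratio using 2
  ring

theorem tendsto_natCast_div_mul_of_antitone (hreg : RegularlyVarying a γ)
    (hapos : ∀ n, 0 < a n) {p : ℕ → ℝ} (hp : Antitone p) {C : ℝ}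
    (hS : Tendsto (fun n => (∑ m ∈ range (n + 1), p m) / a n) atTop (𝓝 C)) :
    Tendsto (fun n : ℕ => n / a n * p n) atTop (𝓝 (γ * C)) := by
  have hslope : Tendsto (fun x : ℝ => C * ((x ^ γ - 1) / (x - 1))) (𝓝[≠] 1) (𝓝 (γ * C)) := by
    simpa only [mul_comm γ] using (tendsto_rpow_sub_one_div_sub_one γ).const_mul C
  refine tendsto_order.2 ⟨fun b hb => ?_, fun b hb => ?_⟩
  · have hright : 𝓝[>] (1 : ℝ) ≤ 𝓝[≠] 1 := nhdsWithin_mono _ fun x hx => ne_of_gt hx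
    obtain ⟨x, hbx, hx1 : 1 < x⟩ := (((hslope.eventually (eventually_gt_nhds hb)).filter_mono
      hright).and self_mem_nhdsWithin).exists
    filter_upwards [(hreg.tendsto_sub_div_mul_div hapos hS (by linarith) hx1.ne').eventually
      (eventually_gt_nhds hbx), eventually_lt_nat_floor_mul hx1] with n hn hnM
    exact hn.trans_le (hp.sum_range_succ_sub_div_mul_le (hapos n) hnM)
  · have hleft : 𝓝[<] (1 : ℝ) ≤ 𝓝[≠] 1 := nhdsWithin_mono _ fun x hx => ne_of_lt hx
    obtain ⟨x, hbx, hx0, hx1⟩ := (((hslope.eventually (eventually_lt_nhds hb)).filter_mono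
      hleft).and (Ioo_mem_nhdsLT zero_lt_one)).exists
    filter_upwards [(hreg.tendsto_sub_div_mul_div hapos hS hx0 hx1.ne).eventually
      (eventually_lt_nhds hbx), eventually_nat_floor_mul_lt hx1] with n hn hMn
    exact (hp.le_sum_range_succ_sub_div_mul (hapos n) hMn).trans_lt hn

end RegularlyVarying

lemma Finset.card_image_eq_card_filter_forall_lt_ne {α β : Type*} [LinearOrder α]
    [DecidableEq β] (s : Finset α) (f : α → β) :
    #(s.image f) = #{k ∈ s | ∀ j ∈ s, k < j → f j ≠ f k} := by
  rw [← card_image_of_injOn (f := f)]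
  · congr 1
    refine (image_subset_image (filter_subset _ s)).antisymm' fun b hb => ?_
    obtain ⟨m, hm, rfl⟩ := mem_image.1 hb
    have hne : {j ∈ s | f j = f m}.Nonempty := ⟨m, mem_filter.2 ⟨hm, rfl⟩⟩
    obtain ⟨hks, hk⟩ := mem_filter.1 ({j ∈ s | f j = f m}.max'_mem hne)
    refine mem_image.2 ⟨_, mem_filter.2 ⟨hks, fun j hj hlt heq => ?_⟩, hk⟩
    exact (le_max' _ j (mem_filter.2 ⟨hj, heq.trans hk⟩)).not_gt hlt
  · intro k hk l hl h
    simp only [coe_filter, Set.mem_ofPred_eq] at hk hl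
    by_contra hne
    rcases lt_or_gt_of_ne hne with hlt | hlt
    · exact hk.2 l hl.1 hlt h.symm
    · exact hl.2 k hk.1 hlt h

lemma card_image_Icc_eq_sum_indicator {Ω : Type*} (Z : ℕ → Ω → ℝ) (n : ℕ) (ω : Ω) :
    (#((Icc 0 n).image fun k => Z k ω) : ℝ)
      = ∑ k ∈ Icc 0 n, {ω | ∀ j ∈ Icc (k + 1) n, Z j ω ≠ Z k ω}.indicator 1 ω := by
  classical
  rw [card_image_eq_card_filter_forall_lt_ne, card_filter]
  push_cast
  refine sum_congr rfl fun k hk => ?_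
  simp only [Set.indicator_apply, Set.mem_ofPred_eq, mem_Icc, Pi.one_apply] at hk ⊢
  congr 1
  exact propext ⟨fun h j hj => h j (by omega) (by omega), fun h j hj hkj => h j (by omega)⟩

namespace HasStationaryIncrements

variable {Ω : Type*} [MeasurableSpace Ω] {μ : Measure Ω} {Z : ℕ → Ω → ℝ}

lemma measure_forall_ne (hstat : HasStationaryIncrements μ Z) (hmeas : ∀ n, Measurable (Z n))
    {k n : ℕ} (hkn : k ≤ n) :
    μ {ω | ∀ j ∈ Icc (k + 1) n, Z j ω ≠ Z k ω} = μ {ω | ∀ j ∈ Icc 1 (n - k), Z j ω ≠ 0} := by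
  let S : Set (ℕ → ℝ) := {f | ∀ i ∈ Icc 1 (n - k), f i ≠ 0}
  have hS : MeasurableSet S := by measurability
  have hshift : {ω | ∀ j ∈ Icc (k + 1) n, Z j ω ≠ Z k ω}
      = (fun ω n => Z (n + k) ω - Z k ω) ⁻¹' S := by
    ext ω
    simp only [Set.mem_ofPred_eq, Set.mem_preimage, S, mem_Icc, ne_eq, sub_eq_zero]
    constructor
    · exact fun h i hi => h (i + k) (by omega)
    · intro h j hj
      simpa [Nat.sub_add_cancel (show k ≤ j by omega)] using h (j - k) (by omega)
  rw [hshift, ← Measure.map_apply (by fun_prop) hS, hstat k, Measure.map_apply (by fun_prop) hS]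
  rfl

lemma integral_card_image_eq_sum (hstat : HasStationaryIncrements μ Z) [IsFiniteMeasure μ]
    (hmeas : ∀ n, Measurable (Z n)) (n : ℕ) :
    ∫ ω, (#((Icc 0 n).image fun k => Z k ω) : ℝ) ∂μ
      = ∑ m ∈ range (n + 1), μ.real {ω | ∀ j ∈ Icc 1 m, Z j ω ≠ 0} := by
  have hA : ∀ k, MeasurableSet {ω | ∀ j ∈ Icc (k + 1) n, Z j ω ≠ Z k ω} := by
    intro k; measurability
  simp_rw [card_image_Icc_eq_sum_indicator]
  rw [integral_finsetSum _ fun k _ => (integrable_const 1).indicator (hA k),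
    ← Nat.range_succ_eq_Icc_zero,
    ← sum_range_reflect (fun m => μ.real {ω | ∀ j ∈ Icc 1 m, Z j ω ≠ 0})]
  refine sum_congr rfl fun k hk => ?_
  have hkn : k ≤ n := Nat.lt_succ_iff.1 (mem_range.1 hk)
  rw [integral_indicator_one (hA k), measureReal_def, measureReal_def,
    hstat.measure_forall_ne hmeas hkn, Nat.add_sub_cancel]

end HasStationaryIncrements

theorem stmt3_general {Ω : Type*} [MeasurableSpace Ω] (μ : Measure Ω) [IsProbabilityMeasure μ]
    (Z : ℕ → Ω → ℝ) (hmeas : ∀ n, Measurable (Z n))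
    (hstat : HasStationaryIncrements μ Z)
    (a : ℕ → ℝ) (hapos : ∀ n, 0 < a n)
    (γ : ℝ) (hreg : RegularlyVarying a γ)
    (C : ℝ)
    (hconv : Tendsto
      (fun n : ℕ => (∫ ω, (((Finset.Icc 0 n).image (fun k => Z k ω)).card : ℝ) ∂μ) / a n)
      atTop (nhds C)) :
    Tendsto (fun n : ℕ =>
        (n : ℝ) / a n * (μ {ω | ∀ j ∈ Finset.Icc 1 n, Z j ω ≠ 0}).toReal)
      atTop (nhds (γ * C)) := by
  have hp : Antitone fun m => μ.real {ω | ∀ j ∈ Icc 1 m, Z j ω ≠ 0} :=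
    fun m n hmn => measureReal_mono fun ω hω j hj => hω j (Icc_subset_Icc_right hmn hj)
  refine hreg.tendsto_natCast_div_mul_of_antitone hapos hp (hconv.congr fun n => ?_)
  rw [hstat.integral_card_image_eq_sum hmeas]

theorem stmt3 {Ω : Type*} [MeasurableSpace Ω] (μ : Measure Ω) [IsProbabilityMeasure μ]
    (Z : ℕ → Ω → ℝ) (hmeas : ∀ n, Measurable (Z n)) (hZ0 : ∀ ω, Z 0 ω = 0)
    (hZint : ∀ n ω, ∃ m : ℤ, Z n ω = m)
    (hstat : HasStationaryIncrements μ Z)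
    (a : ℕ → ℝ) (hapos : ∀ n, 0 < a n)
    (γ : ℝ) (hγ : γ ∈ Set.Ioo (0:ℝ) 1) (hreg : RegularlyVarying a γ)
    (C : ℝ) (hC : 0 < C)
    (hconv : Tendsto
      (fun n : ℕ => (∫ ω, (((Finset.Icc 0 n).image (fun k => Z k ω)).card : ℝ) ∂μ) / a n)
      atTop (nhds C)) :
    Tendsto (fun n : ℕ =>
        (n : ℝ) / a n * (μ {ω | ∀ j ∈ Finset.Icc 1 n, Z j ω ≠ 0}).toReal)
      atTop (nhds (γ * C)) :=
  stmt3_general μ Z hmeas hstat a hapos γ hreg C hconv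
end
end

section
/- Let $(Z_n)_{n\ge 0}$ with $Z_0=0$ be such that, conditionally on a sub-$\sigma$-algebra $\mathcal{F}_0$, the increments $(Z_k - Z_{k-1})_{k\ge 1}$ are positively associated, and the conditional distribution of each increment given $\mathcal{F}_0$ equals the (unconditional) distribution of $Z_1$. Assume also $Z$ has stationary increments. Then for any $m>0$ with $\mathbb{P}(Z_1\le -m)>0$ and all $n\ge 1$: $\mathbb{P}(\max_{1\le \ell\le n} Z_\ell \le -m) \le \mathbb{P}(\max_{1\le \ell\le n} Z_\ell \le 1) \le \mathbb{P}(\max_{1\le\ell\le n} Z_\ell \le -m) / (\mathbb{P}(Z_1\le -m))^{\lfloor 1/m\rfloor + 2}$. -/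
/-!
Write `X_k = Z_{k+1} - Z_k`, `p = P(Z₁ ≤ -c)` and `K = ⌊1/c⌋₊ + 2`, so that `(K - 1) c ≥ 1`.
If the first `K` increments are all `≤ -c` and the walk restarted at time `K` stays `≤ 1`
up to time `n`, then the walk itself stays `≤ -c` up to time `n`. Both conditions describe
lower sets of the increment sequence, so conditional positive association (in its Harris form
for decreasing events), applied `K` times with the conditional law `P(X_k ≤ -c | F₀) = p`,
gives `P(max Z ≤ -c) ≥ p ^ K · P(restarted walk stays ≤ 1)`, and stationarity of the
increments identifies the last probability with `P(max Z ≤ 1)`.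
-/

open MeasureTheory Filter Finset

noncomputable section

theorem IsLowerSet.antitone_indicator_one {α M : Type*} [Preorder α] [Zero M] [One M]
    [Preorder M] [ZeroLEOneClass M] {s : Set α} (hs : IsLowerSet s) :
    Antitone (s.indicator (1 : α → M)) := by
  intro x y hxy
  by_cases hy : y ∈ s
  · simp [Set.indicator_of_mem hy, Set.indicator_of_mem (hs hxy hy)]
  · simpa [Set.indicator_of_notMem hy] using
      Set.indicator_nonneg (f := 1) (fun _ _ => zero_le_one) x

theorem isLowerSet_pi_Iic {ι : Type*} (s : Set ι) (t : ℝ) :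
    IsLowerSet (s.pi fun _ => Set.Iic t : Set (ι → ℝ)) :=
  fun _ _ hyx hx i hi => (hyx i).trans (hx i hi)

section CondAssociated

variable {Ω ι : Type*} {m m₀ : MeasurableSpace Ω} {μ : Measure Ω} {X : Ω → ι → ℝ}

def IsCondAssociated (m : MeasurableSpace Ω) (μ : Measure[m₀] Ω) (X : Ω → ι → ℝ) : Prop :=
  ∀ f g : (ι → ℝ) → ℝ, Monotone f → Monotone g → Measurable f → Measurable g →
    (∃ Cf, ∀ x, |f x| ≤ Cf) → (∃ Cg, ∀ x, |g x| ≤ Cg) →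
    ∀ᵐ ω ∂μ, μ[fun ω' => f (X ω')|m] ω * μ[fun ω' => g (X ω')|m] ω
      ≤ μ[fun ω' => f (X ω') * g (X ω')|m] ω

namespace IsCondAssociated

theorem of_antitone (h : IsCondAssociated m μ X) {f g : (ι → ℝ) → ℝ}
    (hf : Antitone f) (hg : Antitone g) (hfm : Measurable f) (hgm : Measurable g)
    (hfb : ∃ Cf, ∀ x, |f x| ≤ Cf) (hgb : ∃ Cg, ∀ x, |g x| ≤ Cg) :
    ∀ᵐ ω ∂μ, μ[fun ω' => f (X ω')|m] ω * μ[fun ω' => g (X ω')|m] ω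
      ≤ μ[fun ω' => f (X ω') * g (X ω')|m] ω := by
  have hneg := h (fun x => -f x) (fun x => -g x) hf.neg hg.neg hfm.neg hgm.neg
    (by simpa only [abs_neg] using hfb) (by simpa only [abs_neg] using hgb)
  have hf' : μ[fun ω' => -f (X ω')|m] =ᵐ[μ] -μ[fun ω' => f (X ω')|m] := condExp_neg _ m
  have hg' : μ[fun ω' => -g (X ω')|m] =ᵐ[μ] -μ[fun ω' => g (X ω')|m] := condExp_neg _ m
  filter_upwards [hneg, hf', hg'] with ω hω hfω hgω
  simpa only [hfω, hgω, Pi.neg_apply, neg_mul_neg] using hω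

theorem condExp_indicator_mul_le (h : IsCondAssociated m μ X) {D E : Set (ι → ℝ)}
    (hD : IsLowerSet D) (hE : IsLowerSet E) (hDm : MeasurableSet D) (hEm : MeasurableSet E) :
    ∀ᵐ ω ∂μ, μ[(X ⁻¹' D).indicator (1 : Ω → ℝ)|m] ω * μ[(X ⁻¹' E).indicator (1 : Ω → ℝ)|m] ω
      ≤ μ[(X ⁻¹' (D ∩ E)).indicator (1 : Ω → ℝ)|m] ω := by
  have indicator_bound (S : Set (ι → ℝ)) : ∃ C, ∀ x, |S.indicator (1 : (ι → ℝ) → ℝ) x| ≤ C :=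
    ⟨1, fun x => by by_cases hx : x ∈ S <;> simp [hx]⟩
  have hfg : (X ⁻¹' (D ∩ E)).indicator (1 : Ω → ℝ)
      = fun ω => D.indicator 1 (X ω) * E.indicator 1 (X ω) := by
    rw [Set.preimage_inter, Set.inter_indicator_one]
    rfl
  rw [hfg]
  exact h.of_antitone hD.antitone_indicator_one hE.antitone_indicator_one
    (measurable_one.indicator hDm) (measurable_one.indicator hEm)
    (indicator_bound D) (indicator_bound E)

variable {t p : ℝ}

theorem pow_card_mul_condExp_le (h : IsCondAssociated m μ X)
    (hcond : ∀ i, μ[(X ⁻¹' {x | x i ≤ t}).indicator (1 : Ω → ℝ)|m] =ᵐ[μ] fun _ => p) (hp : 0 ≤ p)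
    {D : Set (ι → ℝ)} (hD : IsLowerSet D) (hDm : MeasurableSet D) (s : Finset ι) :
    ∀ᵐ ω ∂μ, p ^ #s * μ[(X ⁻¹' D).indicator (1 : Ω → ℝ)|m] ω
      ≤ μ[(X ⁻¹' (D ∩ (s : Set ι).pi fun _ => Set.Iic t)).indicator (1 : Ω → ℝ)|m] ω := by
  classical
  induction s using Finset.induction_on with
  | empty => simp
  | insert a s ha ih =>
    have hstep := h.condExp_indicator_mul_le (D := {x | x a ≤ t})
      (fun _ _ hyx hx => (hyx a).trans hx) (hD.inter (isLowerSet_pi_Iic _ t))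
      (measurableSet_le (measurable_pi_apply a) measurable_const)
      (hDm.inter (MeasurableSet.pi s.countable_toSet fun _ _ => measurableSet_Iic))
    have hset : {x : ι → ℝ | x a ≤ t} ∩ (D ∩ (s : Set ι).pi fun _ => Set.Iic t)
        = D ∩ ((insert a s : Finset ι) : Set ι).pi fun _ => Set.Iic t := by
      ext x
      simp only [coe_insert, Set.insert_pi, Set.mem_inter_iff, Set.mem_preimage,
        Set.mem_ofPred_eq, Set.mem_Iic]
      tauto
    filter_upwards [ih, hstep, hcond a] with ω hih hstep hpa
    rw [card_insert_of_notMem ha, ← hset]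
    calc p ^ (#s + 1) * μ[(X ⁻¹' D).indicator (1 : Ω → ℝ)|m] ω
        = p * (p ^ #s * μ[(X ⁻¹' D).indicator (1 : Ω → ℝ)|m] ω) := by ring
      _ ≤ p * μ[(X ⁻¹' (D ∩ (s : Set ι).pi fun _ => Set.Iic t)).indicator (1 : Ω → ℝ)|m] ω :=
        mul_le_mul_of_nonneg_left hih hp
      _ ≤ _ := by rw [← hpa]; exact hstep

theorem pow_card_mul_measureReal_le (hm : m ≤ m₀) [SigmaFinite (μ.trim hm)]
    (h : IsCondAssociated m μ X) (hX : Measurable X)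
    (hcond : ∀ i, μ[(X ⁻¹' {x | x i ≤ t}).indicator (1 : Ω → ℝ)|m] =ᵐ[μ] fun _ => p)
    (hp : 0 ≤ p) {D : Set (ι → ℝ)} (hD : IsLowerSet D) (hDm : MeasurableSet D) (s : Finset ι) :
    p ^ #s * μ.real (X ⁻¹' D) ≤ μ.real (X ⁻¹' (D ∩ (s : Set ι).pi fun _ => Set.Iic t)) := by
  have hmono := integral_mono_ae (integrable_condExp.const_mul _) integrable_condExp
    (h.pow_card_mul_condExp_le hcond hp hD hDm s)
  rwa [integral_const_mul, integral_condExp hm, integral_condExp hm,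
    integral_indicator_one (hX hDm), integral_indicator_one
      (hX (hDm.inter (MeasurableSet.pi s.countable_toSet fun _ _ => measurableSet_Iic)))] at hmono

end IsCondAssociated

end CondAssociated

section Increments

variable {Ω : Type*} {Z : ℕ → Ω → ℝ}

def increments (Z : ℕ → Ω → ℝ) (ω : Ω) (k : ℕ) : ℝ := Z (k + 1) ω - Z k ω

theorem sum_range_increments (ω : Ω) (K ℓ : ℕ) :
    ∑ k ∈ range ℓ, increments Z ω (K + k) = Z (K + ℓ) ω - Z K ω :=
  sum_range_sub (fun k => Z (K + k) ω) ℓ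

variable [MeasurableSpace Ω]

theorem measurable_increments (hZ : ∀ n, Measurable (Z n)) : Measurable (increments Z) :=
  measurable_pi_lambda _ fun k => (hZ _).sub (hZ k)

theorem HasStationaryIncrements.measure_preimage {μ : Measure Ω}
    (h : HasStationaryIncrements μ Z) (hZ : ∀ n, Measurable (Z n)) (k : ℕ)
    {S : Set (ℕ → ℝ)} (hS : MeasurableSet S) :
    μ ((fun ω n => Z (n + k) ω - Z k ω) ⁻¹' S) = μ ((fun ω n => Z n ω) ⁻¹' S) := by
  have hshift : Measurable fun ω n => Z (n + k) ω - Z k ω :=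
    measurable_pi_lambda _ fun n => (hZ _).sub (hZ k)
  rw [← Measure.map_apply hshift hS, h k, Measure.map_apply (measurable_pi_lambda _ hZ) hS]

theorem HasStationaryIncrements.measure_restart {μ : Measure Ω}
    (h : HasStationaryIncrements μ Z) (hZ : ∀ n, Measurable (Z n)) (K : ℕ) (s : Finset ℕ)
    (a : ℝ) :
    μ (increments Z ⁻¹' {x | ∀ ℓ ∈ s, ∑ k ∈ range ℓ, x (K + k) ≤ a})
      = μ {ω | ∀ ℓ ∈ s, Z ℓ ω ≤ a} := by
  have hrestart : increments Z ⁻¹' {x | ∀ ℓ ∈ s, ∑ k ∈ range ℓ, x (K + k) ≤ a}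
      = (fun ω n => Z (n + K) ω - Z K ω) ⁻¹' {y | ∀ ℓ ∈ s, y ℓ ≤ a} := by
    ext ω
    simp only [Set.mem_preimage, Set.mem_ofPred_eq, sum_range_increments]
    simp only [add_comm K]
  rw [hrestart, h.measure_preimage hZ K (by measurability)]
  rfl

end Increments

theorem le_neg_of_initial_descent {z : ℕ → ℝ} (hz0 : z 0 = 0) {c : ℝ} (hc : 0 < c) {K n : ℕ}
    (hK : 1 ≤ ((K : ℝ) - 1) * c) (hdrop : ∀ k < K, z (k + 1) - z k ≤ -c)
    (hafter : ∀ ℓ ∈ Icc 1 n, z (K + ℓ) - z K ≤ 1) :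
    ∀ ℓ ∈ Icc 1 n, z ℓ ≤ -c := by
  have hdescent : ∀ j ≤ K, z j ≤ -(j * c) := by
    intro j
    induction j with
    | zero => simp [hz0]
    | succ j ih =>
      intro hj
      push_cast
      linarith [hdrop j hj, ih (by omega)]
  intro ℓ hℓ
  rw [mem_Icc] at hℓ
  rcases le_or_gt ℓ K with hℓK | hKℓ
  · have hℓ1 : (1 : ℝ) ≤ ℓ := by exact_mod_cast hℓ.1
    nlinarith [hdescent ℓ hℓK]
  · obtain ⟨d, rfl⟩ := Nat.exists_eq_add_of_lt hKℓ
    have hrise := hafter (d + 1) (mem_Icc.2 ⟨by omega, by omega⟩)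
    rw [← add_assoc] at hrise
    linarith [hdescent K le_rfl]

theorem stmt6_general {Ω : Type*} {mΩ : MeasurableSpace Ω} (μ : Measure Ω) [IsProbabilityMeasure μ]
    (Z : ℕ → Ω → ℝ) (hmeas : ∀ n, Measurable (Z n)) (hZ0 : ∀ ω, Z 0 ω = 0)
    (hstat : HasStationaryIncrements μ Z)
    (F0 : MeasurableSpace Ω) (hF0 : F0 ≤ mΩ)
    -- conditional positive association of the increments given `F0`
    (hassoc : ∀ f g : (ℕ → ℝ) → ℝ, Monotone f → Monotone g →
      Measurable f → Measurable g →
      (∃ Cf, ∀ x, |f x| ≤ Cf) → (∃ Cg, ∀ x, |g x| ≤ Cg) →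
      ∀ᵐ ω ∂μ,
        (μ[fun ω' => f (fun k => Z (k + 1) ω' - Z k ω')|F0]) ω
          * (μ[fun ω' => g (fun k => Z (k + 1) ω' - Z k ω')|F0]) ω
        ≤ (μ[fun ω' => f (fun k => Z (k + 1) ω' - Z k ω')
              * g (fun k => Z (k + 1) ω' - Z k ω')|F0]) ω)
    -- the conditional distribution of each increment given `F0` is the law of `Z_1`
    (hconddist : ∀ k : ℕ, ∀ t : ℝ,
      (μ[Set.indicator {ω' | Z (k + 1) ω' - Z k ω' ≤ t} (fun _ => (1 : ℝ))|F0])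
        =ᵐ[μ] fun _ => (μ {ω' | Z 1 ω' ≤ t}).toReal)
    (c : ℝ) (hc : 0 < c) (hpos : 0 < (μ {ω | Z 1 ω ≤ -c}).toReal)
    (n : ℕ) :
    (μ {ω | ∀ ℓ ∈ Finset.Icc 1 n, Z ℓ ω ≤ -c}).toReal
        ≤ (μ {ω | ∀ ℓ ∈ Finset.Icc 1 n, Z ℓ ω ≤ 1}).toReal
    ∧ (μ {ω | ∀ ℓ ∈ Finset.Icc 1 n, Z ℓ ω ≤ 1}).toReal
        ≤ (μ {ω | ∀ ℓ ∈ Finset.Icc 1 n, Z ℓ ω ≤ -c}).toReal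
            / ((μ {ω | Z 1 ω ≤ -c}).toReal) ^ (⌊1 / c⌋₊ + 2) := by
  -- otherwise instance search picks the later binder `F0` as the σ-algebra of `μ.real`
  let _ : MeasurableSpace Ω := mΩ
  set K := ⌊1 / c⌋₊ + 2
  have hK : 1 ≤ ((K : ℝ) - 1) * c := by
    have := Nat.lt_floor_add_one (1 / c)
    rw [div_lt_iff₀ hc] at this
    push_cast [K]
    linarith
  set D : Set (ℕ → ℝ) := {x | ∀ ℓ ∈ Icc 1 n, ∑ k ∈ range ℓ, x (K + k) ≤ 1}
  have hD : IsLowerSet D := fun x y hyx hx ℓ hℓ =>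
    (sum_le_sum fun k _ => hyx (K + k)).trans (hx ℓ hℓ)
  have key := IsCondAssociated.pow_card_mul_measureReal_le (X := increments Z) hF0 hassoc
    (measurable_increments hmeas) (fun i => hconddist i (-c)) hpos.le hD (by measurability)
    (range K)
  rw [card_range, measureReal_def, hstat.measure_restart hmeas K (Icc 1 n) 1] at key
  have hend : increments Z ⁻¹' (D ∩ (range K : Set ℕ).pi fun _ => Set.Iic (-c))
      ⊆ {ω | ∀ ℓ ∈ Icc 1 n, Z ℓ ω ≤ -c} := by
    rintro ω ⟨hafter, hdrop⟩
    exact le_neg_of_initial_descent (hZ0 ω) hc hK (fun k hk => hdrop k (by simpa using hk))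
      fun ℓ hℓ => by simpa only [sum_range_increments] using hafter ℓ hℓ
  refine ⟨measureReal_mono fun ω hω ℓ hℓ => (hω ℓ hℓ).trans (by linarith), ?_⟩
  rw [le_div_iff₀ (pow_pos hpos K), mul_comm]
  exact key.trans (measureReal_mono hend)

/-- Transfer of persistence bounds between boundaries `-c` and `+1`, under conditional
positive association of the increments given a sub-σ-algebra `F0`, the conditional
distribution of each increment given `F0` being the (unconditional) law of `Z_1`. -/
theorem stmt6 {Ω : Type*} {mΩ : MeasurableSpace Ω} (μ : Measure Ω) [IsProbabilityMeasure μ]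
    (Z : ℕ → Ω → ℝ) (hmeas : ∀ n, Measurable (Z n)) (hZ0 : ∀ ω, Z 0 ω = 0)
    (hstat : HasStationaryIncrements μ Z)
    (F0 : MeasurableSpace Ω) (hF0 : F0 ≤ mΩ)
    -- conditional positive association of the increments given `F0`
    (hassoc : ∀ f g : (ℕ → ℝ) → ℝ, Monotone f → Monotone g →
      Measurable f → Measurable g →
      (∃ Cf, ∀ x, |f x| ≤ Cf) → (∃ Cg, ∀ x, |g x| ≤ Cg) →
      ∀ᵐ ω ∂μ,
        (μ[fun ω' => f (fun k => Z (k + 1) ω' - Z k ω')|F0]) ω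
          * (μ[fun ω' => g (fun k => Z (k + 1) ω' - Z k ω')|F0]) ω
        ≤ (μ[fun ω' => f (fun k => Z (k + 1) ω' - Z k ω')
              * g (fun k => Z (k + 1) ω' - Z k ω')|F0]) ω)
    -- the conditional distribution of each increment given `F0` is the law of `Z_1`
    (hconddist : ∀ k : ℕ, ∀ t : ℝ,
      (μ[Set.indicator {ω' | Z (k + 1) ω' - Z k ω' ≤ t} (fun _ => (1 : ℝ))|F0])
        =ᵐ[μ] fun _ => (μ {ω' | Z 1 ω' ≤ t}).toReal)
    (c : ℝ) (hc : 0 < c) (hpos : 0 < (μ {ω | Z 1 ω ≤ -c}).toReal)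
    (n : ℕ) (hn : 1 ≤ n) :
    (μ {ω | ∀ ℓ ∈ Finset.Icc 1 n, Z ℓ ω ≤ -c}).toReal
        ≤ (μ {ω | ∀ ℓ ∈ Finset.Icc 1 n, Z ℓ ω ≤ 1}).toReal
    ∧ (μ {ω | ∀ ℓ ∈ Finset.Icc 1 n, Z ℓ ω ≤ 1}).toReal
        ≤ (μ {ω | ∀ ℓ ∈ Finset.Icc 1 n, Z ℓ ω ≤ -c}).toReal
            / ((μ {ω | Z 1 ω ≤ -c}).toReal) ^ (⌊1 / c⌋₊ + 2) :=
  stmt6_general μ Z hmeas hZ0 hstat F0 hF0 hassoc hconddist c hc hpos n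
end
end

section
/- Let $(Z_n)_{n\ge 0}$ with $Z_0=0$, and fix $\varepsilon>0$ and $n\ge 1$. Define $Z^*_{a,b}:=\max_{a\le k\le b} Z_k$, $M_n := \#\{0\le k\le\lfloor\varepsilon n\rfloor - 1 : Z^*_{k+1, n+\lfloor\varepsilon n\rfloor} < Z_k\}$. Then, pathwise, $Z^*_{0, n+\lfloor\varepsilon n\rfloor} - Z^*_{\lfloor\varepsilon n\rfloor, n+\lfloor\varepsilon n\rfloor} \le \big(\max_{1\le k\le\lfloor\varepsilon n\rfloor}(Z_{k-1}-Z_k)\big) \cdot M_n$. -/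
/-!
With `N = ⌊ε n⌋`, write `g k` for the maximum of `Z` over `[k, n + N]`, so that
`g k = max (Z k) (g (k + 1))`. Telescoping, `g 0 - g N = ∑_{k < N} (g k - g (k + 1))`, and
the `k`-th term vanishes unless `k` is a record (`g (k + 1) < Z k`); at a record it equals
`Z k - g (k + 1) ≤ Z k - Z (k + 1)`, which is at most the largest one-step decrease.
-/

open Finset

lemma ciSup_finset_eq_sup' {ι α : Type*} [ConditionallyCompleteLattice α] (s : Finset ι)
    (hs : s.Nonempty) (f : ι → α) : ⨆ i : s, f i = s.sup' hs f := by
  rw [sup'_eq_csSup_image, Set.image_eq_range]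
  rfl

lemma ciSup_Icc_eq_max {α : Type*} [ConditionallyCompleteLinearOrder α] (f : ℕ → α)
    {k b : ℕ} (hkb : k < b) :
    ⨆ j : Icc k b, f j = max (f k) (⨆ j : Icc (k + 1) b, f j) := by
  rw [ciSup_finset_eq_sup' _ (nonempty_Icc.2 hkb.le), ciSup_finset_eq_sup' _ (nonempty_Icc.2 hkb)]
  simp_rw [← insert_Icc_add_one_left_eq_Icc hkb.le]
  rw [sup'_insert]

lemma le_ciSup_Icc {α : Type*} [ConditionallyCompleteLinearOrder α] (f : ℕ → α)
    {k b : ℕ} (hkb : k ≤ b) : f k ≤ ⨆ j : Icc k b, f j :=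
  le_ciSup (f := fun j : Icc k b => f j) (Set.finite_range _).bddAbove ⟨k, mem_Icc.2 ⟨le_rfl, hkb⟩⟩

lemma sub_le_card_smul_of_eq_max {α : Type*} [AddCommGroup α] [LinearOrder α]
    [IsOrderedAddMonoid α] {Z g : ℕ → α} {N : ℕ} {D : α}
    (hg : ∀ k < N, g k = max (Z k) (g (k + 1))) (hZg : Z N ≤ g N)
    (hD : ∀ k < N, Z k - Z (k + 1) ≤ D) :
    g 0 - g N ≤ #{k ∈ range N | g (k + 1) < Z k} • D := by
  have hZg' : ∀ k < N, Z (k + 1) ≤ g (k + 1) := by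
    intro k hk
    rcases (Nat.succ_le_of_lt hk).lt_or_eq with hlt | rfl
    · exact (hg _ hlt).ge.trans' (le_max_left _ _)
    · exact hZg
  calc g 0 - g N = ∑ k ∈ range N, (g k - g (k + 1)) := (sum_range_sub' g N).symm
    _ = ∑ k ∈ range N with g (k + 1) < Z k, (g k - g (k + 1)) := by
      refine (sum_filter_of_ne fun k hk hne => ?_).symm
      by_contra! hle
      rw [hg k (mem_range.1 hk), max_eq_right hle, sub_self] at hne
      exact hne rfl
    _ ≤ ∑ k ∈ range N with g (k + 1) < Z k, D := by
      refine sum_le_sum fun k hk => ?_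
      obtain ⟨hkN, hrec⟩ := mem_filter.1 hk
      rw [hg k (mem_range.1 hkN), max_eq_left hrec.le]
      exact (sub_le_sub_left (hZg' k (mem_range.1 hkN)) _).trans (hD k (mem_range.1 hkN))
    _ = _ := sum_const _

theorem stmt17_general (Z : ℕ → ℝ) (ε : ℝ)
    (n : ℕ) :
    (⨆ k : Finset.Icc 0 (n + ⌊ε * n⌋₊), Z k.1)
      - (⨆ k : Finset.Icc ⌊ε * n⌋₊ (n + ⌊ε * n⌋₊), Z k.1)
    ≤ (⨆ k : Finset.Icc 1 ⌊ε * n⌋₊, (Z (k.1 - 1) - Z k.1))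
      * (Set.ncard {k : ℕ | k < ⌊ε * n⌋₊
          ∧ (⨆ j : Finset.Icc (k + 1) (n + ⌊ε * n⌋₊), Z j.1) < Z k}) := by
  set N := ⌊ε * n⌋₊
  set g : ℕ → ℝ := fun k => ⨆ j : Icc k (n + N), Z j
  have hrecords : {k : ℕ | k < N ∧ g (k + 1) < Z k} = ↑({k ∈ range N | g (k + 1) < Z k}) := by
    ext k
    simp
  have key := sub_le_card_smul_of_eq_max (Z := Z) (g := g) (N := N)
    (D := ⨆ k : Icc 1 N, (Z (k.1 - 1) - Z k.1))
    (fun k hk => ciSup_Icc_eq_max Z (by omega)) (le_ciSup_Icc Z (by omega))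
    (fun k hk => le_ciSup (f := fun j : Icc 1 N => Z (j.1 - 1) - Z j.1)
      (Set.finite_range _).bddAbove ⟨k + 1, mem_Icc.2 ⟨by omega, hk⟩⟩)
  rwa [nsmul_eq_mul, mul_comm, ← Set.ncard_coe_finset, ← hrecords] at key

/-- Pathwise combinatorial inequality: with `N = ⌊ε n⌋`,
`Z*₀,ₙ₊ₙ' - Z*ₙ',ₙ₊ₙ' ≤ (max_{1≤k≤N}(Z_{k-1} - Z_k)) · M_n`, where `M_n` counts the
indices `0 ≤ k ≤ N - 1` such that `max_{k+1 ≤ j ≤ n+N} Z_j < Z_k`. -/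
theorem stmt17 (Z : ℕ → ℝ) (hZ0 : Z 0 = 0) (ε : ℝ) (hε : 0 < ε)
    (n : ℕ) (hn : 1 ≤ n) :
    (⨆ k : Finset.Icc 0 (n + ⌊ε * n⌋₊), Z k.1)
      - (⨆ k : Finset.Icc ⌊ε * n⌋₊ (n + ⌊ε * n⌋₊), Z k.1)
    ≤ (⨆ k : Finset.Icc 1 ⌊ε * n⌋₊, (Z (k.1 - 1) - Z k.1))
      * (Set.ncard {k : ℕ | k < ⌊ε * n⌋₊
          ∧ (⨆ j : Finset.Icc (k + 1) (n + ⌊ε * n⌋₊), Z j.1) < Z k}) :=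
  stmt17_general Z ε n
end
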